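/- Along solutions of the error system of γ-Observer 2 (with |γ̄| = 1), the function S0 = (1/2)|v̄ × γ̄|² + (g/k₁ʳ)(1 − e₃ᵀγ̄) satisfies dS0/dt = −(k₁ᵛ + k₂ᵛ)|v̄ × γ̄|². -/

import Mathlib

/-!
With `w = v̄ × γ̄`, the derivative of `S0` is `w ⬝ (v̄' × γ̄ + v̄ × γ̄') − (g/k₁ʳ) e₃ ⬝ γ̄'`.
Expanding `v̄'` and `γ̄'` and reducing every term with the vector triple product identities, the
gravity term `g (e₃ − γ̄)` cancels against the `e₃` term (this is what the weight `g/k₁ʳ` is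
chosen for), the two `k₁ʳ` terms both equal `k₁ʳ (v̄ ⬝ γ̄) |w|²` and cancel, and `|γ̄| = 1` turns
`(γ̄ × (γ̄ × v̄)) × γ̄` into `−w`, which leaves `−(k₁ᵛ + k₂ᵛ)|w|²`.
-/

open Matrix

noncomputable section

def cross3 (u v : Fin 3 → ℝ) : Fin 3 → ℝ :=
  ![u 1 * v 2 - u 2 * v 1, u 2 * v 0 - u 0 * v 2, u 0 * v 1 - u 1 * v 0]

def norm3 (u : Fin 3 → ℝ) : ℝ := Real.sqrt (u ⬝ᵥ u)

def e3 : Fin 3 → ℝ := ![0, 0, 1]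

theorem cross3_eq_crossProduct (u v : Fin 3 → ℝ) : cross3 u v = u ⨯₃ v := by
  rw [cross3, cross_apply]

theorem dotProduct_self_eq_one_of_norm3_eq_one {u : Fin 3 → ℝ} (h : norm3 u = 1) :
    u ⬝ᵥ u = 1 :=
  (Real.sqrt_eq_one).mp h

section Derivatives

variable {𝕜 : Type*} [NontriviallyNormedField 𝕜] [CompleteSpace 𝕜] {t : 𝕜}

theorem HasDerivAt.dotProduct {ι : Type*} [Fintype ι] {u w : 𝕜 → ι → 𝕜} {u' w' : ι → 𝕜}
    (hu : HasDerivAt u u' t) (hw : HasDerivAt w w' t) :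
    HasDerivAt (fun s => u s ⬝ᵥ w s) (u' ⬝ᵥ w t + u t ⬝ᵥ w') t := by
  simpa [add_comm] using
    (dotProductBilin 𝕜 𝕜).toContinuousBilinearMap.hasDerivAt_of_bilinear
      (fun _ => hu) (fun _ => hw)

theorem HasDerivAt.cross {u w : 𝕜 → Fin 3 → 𝕜} {u' w' : Fin 3 → 𝕜}
    (hu : HasDerivAt u u' t) (hw : HasDerivAt w w' t) :
    HasDerivAt (fun s => u s ⨯₃ w s) (u' ⨯₃ w t + u t ⨯₃ w') t := by
  simpa [add_comm] using
    (crossProduct (R := 𝕜)).toContinuousBilinearMap.hasDerivAt_of_bilinear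
      (fun _ => hu) (fun _ => hw)

end Derivatives

section CrossIdentities

variable {R : Type*} [CommRing R] (u v w : Fin 3 → R)

theorem cross_dot_cross_eq_neg_dot_cross_cross :
    u ⨯₃ v ⬝ᵥ w ⨯₃ v = -(w ⬝ᵥ v ⨯₃ (v ⨯₃ u)) := by
  rw [cross_dot_cross, cross_cross_eq_smul_sub_smul', dotProduct_sub, dotProduct_smul,
    dotProduct_smul, smul_eq_mul, smul_eq_mul, dotProduct_comm u v, dotProduct_comm u w,
    dotProduct_comm v w]
  ring

theorem cross_cross_cross_self : v ⨯₃ (v ⨯₃ u) ⨯₃ v = -(v ⬝ᵥ v) • u ⨯₃ v := by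
  rw [cross_cross_eq_smul_sub_smul', map_sub, map_smul, map_smul, LinearMap.sub_apply,
    LinearMap.smul_apply, LinearMap.smul_apply, cross_self, smul_zero, zero_sub, neg_smul]

theorem cross_dot_cross_cross_cross :
    u ⨯₃ v ⬝ᵥ u ⨯₃ (u ⨯₃ v) ⨯₃ v = (u ⬝ᵥ v) * (u ⨯₃ v ⬝ᵥ u ⨯₃ v) := by
  rw [cross_cross_eq_smul_sub_smul, dotProduct_comm (u ⨯₃ v) v, dot_cross_self, zero_smul,
    sub_zero, dotProduct_smul, smul_eq_mul]

theorem cross_dot_cross_cross_cross' :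
    u ⨯₃ v ⬝ᵥ u ⨯₃ (v ⨯₃ (v ⨯₃ u)) = (u ⬝ᵥ v) * (u ⨯₃ v ⬝ᵥ u ⨯₃ v) := by
  rw [cross_cross_eq_smul_sub_smul' v v u, map_sub, map_smul, map_smul, cross_self, smul_zero,
    sub_zero, dotProduct_smul, smul_eq_mul, dotProduct_comm v u]

end CrossIdentities

theorem errorSystem_lyapunov_identity {K : Type*} [Field K] {g k1v k2v k1r : K} (hk : k1r ≠ 0)
    {e v γ v' γ' : Fin 3 → K} (hγ : γ ⬝ᵥ γ = 1)
    (hv' : v' = g • (e - γ) - k1v • v + k2v • γ ⨯₃ (γ ⨯₃ v) + k1r • v ⨯₃ (v ⨯₃ γ))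
    (hγ' : γ' = -(k1r • γ ⨯₃ (γ ⨯₃ v))) :
    v ⨯₃ γ ⬝ᵥ (v' ⨯₃ γ + v ⨯₃ γ') - g / k1r * (e ⬝ᵥ γ') =
      -((k1v + k2v) * (v ⨯₃ γ ⬝ᵥ v ⨯₃ γ)) := by
  subst hv' hγ'
  simp only [map_add, map_sub, map_smul, map_neg, LinearMap.add_apply, LinearMap.sub_apply,
    LinearMap.smul_apply, cross_self, dotProduct_add, dotProduct_sub, dotProduct_smul,
    dotProduct_neg, smul_eq_mul, sub_zero]
  rw [cross_dot_cross_eq_neg_dot_cross_cross, cross_cross_cross_self, hγ,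
    cross_dot_cross_cross_cross, cross_dot_cross_cross_cross', neg_one_smul, dotProduct_neg]
  field_simp
  ring

theorem stmt_9_general (g k1v k2v k1r : ℝ) (h3 : 0 < k1r) (v γ : ℝ → Fin 3 → ℝ)
    (hγunit : ∀ t, norm3 (γ t) = 1)
    (hv : ∀ t, HasDerivAt v
      (g • (e3 - γ t) - k1v • v t + k2v • cross3 (γ t) (cross3 (γ t) (v t))
        + k1r • cross3 (v t) (cross3 (v t) (γ t))) t)
    (hγ : ∀ t, HasDerivAt γ (-(k1r • cross3 (γ t) (cross3 (γ t) (v t)))) t) :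
    ∀ t, HasDerivAt
      (fun s => (1 / 2) * (cross3 (v s) (γ s) ⬝ᵥ cross3 (v s) (γ s))
        + (g / k1r) * (1 - e3 ⬝ᵥ γ s))
      (-((k1v + k2v) * (cross3 (v t) (γ t) ⬝ᵥ cross3 (v t) (γ t)))) t := by
  intro t
  simp only [cross3_eq_crossProduct] at hv hγ ⊢
  have hw := (hv t).cross (hγ t)
  have hS := ((hw.dotProduct hw).const_mul (1 / 2)).add
    (((hasDerivAt_const t e3).dotProduct (hγ t)).const_sub 1 |>.const_mul (g / k1r))
  refine hS.congr_deriv ?_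
  rw [← errorSystem_lyapunov_identity h3.ne' (dotProduct_self_eq_one_of_norm3_eq_one (hγunit t))
    rfl rfl, dotProduct_comm _ (v t ⨯₃ γ t)]
  simp only [zero_dotProduct, zero_add]
  ring

/-- along the error system of `γ`-Observer 2, the function
`S0 = (1/2)|v̄ × γ̄|² + (g/k₁ʳ)(1 − e₃ᵀγ̄)` satisfies
`dS0/dt = −(k₁ᵛ + k₂ᵛ)|v̄ × γ̄|²`. -/
theorem stmt_9 (g k1v k2v k1r : ℝ) (hg : 0 < g) (h1 : 0 < k1v) (h2 : 0 < k2v)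
    (h3 : 0 < k1r) (v γ : ℝ → Fin 3 → ℝ)
    (hγunit : ∀ t, norm3 (γ t) = 1)
    (hv : ∀ t, HasDerivAt v
      (g • (e3 - γ t) - k1v • v t + k2v • cross3 (γ t) (cross3 (γ t) (v t))
        + k1r • cross3 (v t) (cross3 (v t) (γ t))) t)
    (hγ : ∀ t, HasDerivAt γ (-(k1r • cross3 (γ t) (cross3 (γ t) (v t)))) t) :
    ∀ t, HasDerivAt
      (fun s => (1 / 2) * (cross3 (v s) (γ s) ⬝ᵥ cross3 (v s) (γ s))
        + (g / k1r) * (1 - e3 ⬝ᵥ γ s))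
      (-((k1v + k2v) * (cross3 (v t) (γ t) ⬝ᵥ cross3 (v t) (γ t)))) t :=
  stmt_9_general g k1v k2v k1r h3 v γ hγunit hv hγ
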